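/- Define p_n = R_n / (2^n N_n), where R_n is the total ultimate rank and N_n the cardinality of the semigroup P_n of partial automorphisms of the n-level binary rooted tree. Then p_n ≤ (3/4) p_{n-1} for all n ≥ 2. -/

import Mathlib

open scoped BigOperators

/-- A partial automorphism of the `n`-level binary rooted tree.  Vertices of the tree are
encoded as binary strings of length at most `n`: the root is the empty string and the two
children of a vertex `l` are `l ++ [b]` for `b : Bool`.  A partial automorphism is an
injective partial map (with `none` standing for "undefined") whose domain is a subtree
containing the root, which fixes the root and maps children of a vertex in its domain to
children of its image; equivalently, it is an isomorphism between two subtrees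
containing the root. -/
structure PartialAut (n : ℕ) where
  toFun : List Bool → Option (List Bool)
  length_le : ∀ l m, toFun l = some m → l.length ≤ n
  root_map : toFun [] = some []
  child_map : ∀ l b m, toFun (l ++ [b]) = some m →
      ∃ u b', toFun l = some u ∧ m = u ++ [b']
  inj : ∀ l l' m, toFun l = some m → toFun l' = some m → l = l'

namespace PartialAut

variable {n : ℕ}

theorem ext' {x y : PartialAut n} (h : x.toFun = y.toFun) : x = y := by
  cases x; cases y; cases h; rfl

theorem toFun_eq_none {x : PartialAut n} {l : List Bool} (h : ¬ l.length ≤ n) :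
    x.toFun l = none := by
  cases hx : x.toFun l with
  | none => rfl
  | some m => exact absurd (x.length_le l m hx) h

theorem length_map {x : PartialAut n} : ∀ l m : List Bool, x.toFun l = some m →
    m.length = l.length := by
  intro l
  induction l using List.reverseRecOn with
  | nil => intro m h; rw [x.root_map] at h; cases h; rfl
  | append_singleton l b ih =>
      intro m h
      obtain ⟨u, b', hu, rfl⟩ := x.child_map l b m h
      simp [ih u hu]

/-- Composition of partial automorphisms (first apply `x`, then `y`), together with the
identity automorphism, makes `PartialAut n` a monoid (in particular a semigroup). -/
instance : Monoid (PartialAut n) where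
  mul x y :=
    { toFun := fun l => (x.toFun l).bind y.toFun
      length_le := by
        intro l m h
        (try dsimp only at h)
        cases hx : x.toFun l with
        | none => rw [hx] at h; cases h
        | some k => exact x.length_le l k hx
      root_map := by (try dsimp only); rw [x.root_map]; simpa using y.root_map
      child_map := by
        intro l b m h
        (try dsimp only at h ⊢)
        cases hx : x.toFun (l ++ [b]) with
        | none => rw [hx] at h; cases h
        | some k =>
          rw [hx, Option.bind_some] at h
          obtain ⟨u, b', hu, rfl⟩ := x.child_map l b k hx
          obtain ⟨w, b'', hw, rfl⟩ := y.child_map u b' m h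
          exact ⟨w, b'', by rw [hu, Option.bind_some, hw], rfl⟩
      inj := by
        intro l l' m h h'
        (try dsimp only at h h')
        cases hx : x.toFun l with
        | none => rw [hx] at h; cases h
        | some k =>
          cases hx' : x.toFun l' with
          | none => rw [hx'] at h'; cases h'
          | some k' =>
            rw [hx, Option.bind_some] at h
            rw [hx', Option.bind_some] at h'
            have hkk : k = k' := y.inj k k' m h h'
            subst hkk
            exact x.inj l l' k hx hx' }
  one :=
    { toFun := fun l => if l.length ≤ n then some l else none
      length_le := by
        intro l m h
        (try dsimp only at h)
        split at h
        · assumption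
        · cases h
      root_map := by simp
      child_map := by
        intro l b m h
        (try dsimp only at h ⊢)
        split at h
        · cases h
          have hl : l.length ≤ n := by
            simp only [List.length_append, List.length_cons, List.length_nil] at *
            omega
          exact ⟨l, b, by simp [hl], rfl⟩
        · cases h
      inj := by
        intro l l' m h h'
        (try dsimp only at h h')
        split at h
        · cases h
          split at h'
          · cases h'; rfl
          · cases h'
        · cases h }
  mul_assoc x y z := ext' (funext fun l => Option.bind_assoc _ _ _)
  one_mul x := by
    apply ext'
    funext l
    by_cases hl : l.length ≤ n
    · show (if l.length ≤ n then some l else none).bind x.toFun = x.toFun l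
      simp [hl]
    · show (if l.length ≤ n then some l else none).bind x.toFun = x.toFun l
      simp [hl, toFun_eq_none hl]
  mul_one x := by
    apply ext'
    funext l
    show (x.toFun l).bind (fun m => if m.length ≤ n then some m else none) = x.toFun l
    cases hx : x.toFun l with
    | none => rfl
    | some m =>
      have hm : m.length ≤ n := (length_map l m hx) ▸ x.length_le l m hx
      simp [hm]

@[simp] theorem mul_toFun (x y : PartialAut n) (l : List Bool) :
    (x * y).toFun l = (x.toFun l).bind y.toFun := rfl

@[simp] theorem one_toFun (l : List Bool) :
    (1 : PartialAut n).toFun l = if l.length ≤ n then some l else none := rfl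

instance : Finite (PartialAut n) := by
  haveI hV : Finite {l : List Bool // l.length ≤ n} := (List.finite_length_le Bool n).to_subtype
  haveI := Fintype.ofFinite {l : List Bool // l.length ≤ n}
  apply Finite.of_injective
    (fun (x : PartialAut n) (v : {l : List Bool // l.length ≤ n}) =>
      (x.toFun v.1).bind fun m => if hm : m.length ≤ n then
        some (⟨m, hm⟩ : {l : List Bool // l.length ≤ n}) else none)
  intro x y h
  apply ext'
  funext l
  by_cases hl : l.length ≤ n
  · have h' := congrFun h ⟨l, hl⟩
    dsimp only at h'
    cases hx : x.toFun l with
    | none =>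
      cases hy : y.toFun l with
      | none => rfl
      | some m =>
        have hm : m.length ≤ n := (length_map l m hy) ▸ y.length_le l m hy
        rw [hx, hy] at h'
        simp [hm] at h'
    | some m =>
      have hm : m.length ≤ n := (length_map l m hx) ▸ x.length_le l m hx
      cases hy : y.toFun l with
      | none =>
        rw [hx, hy] at h'
        simp [hm] at h'
      | some k =>
        have hk : k.length ≤ n := (length_map l k hy) ▸ y.length_le l k hy
        rw [hx, hy] at h'
        simp only [Option.bind_some, hm, hk, dif_pos] at h'
        rw [Option.some_inj, Subtype.mk.injEq] at h'
        rw [h']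
  · rw [toFun_eq_none hl, toFun_eq_none hl]

noncomputable instance : Fintype (PartialAut n) := Fintype.ofFinite _

end PartialAut

/-- The set of vertices of the `n`-th (bottom) level of the `n`-level binary rooted tree. -/
def Leaf (n : ℕ) : Type := {l : List Bool // l.length = n}

instance (n : ℕ) : DecidableEq (Leaf n) := fun a b =>
  decidable_of_iff (a.1 = b.1) Subtype.ext_iff.symm

instance (n : ℕ) : Finite (Leaf n) := by
  have : Finite {l : List Bool // l.length = n} := (List.finite_length_eq Bool n).to_subtype
  exact this

noncomputable instance (n : ℕ) : Fintype (Leaf n) := Fintype.ofFinite _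

/-- The domain of a partial automorphism. -/
def PartialAut.dom {n : ℕ} (x : PartialAut n) : Set (List Bool) := {l | x.toFun l ≠ none}

/-- `N_n`, the number of elements of the semigroup `P_n`. -/
noncomputable def Nn (n : ℕ) : ℕ := Nat.card (PartialAut n)

/-- `S_n(x)`: the bottom-level vertices surviving all iterates of `x`. -/
def survSet {n : ℕ} (x : PartialAut n) : Set (List Bool) :=
  {l | l.length = n ∧ ∀ m : ℕ, 1 ≤ m → l ∈ (x ^ m).dom}

/-- The ultimate rank `rk_n(x) = |S_n(x)|`. -/
noncomputable def urk {n : ℕ} (x : PartialAut n) : ℕ := Nat.card (survSet x)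

/-- The total ultimate rank `R_n`. -/
noncomputable def Rn (n : ℕ) : ℕ := ∑ x : PartialAut n, urk x

/-- `rank_n(x) = |dom(x) ∩ B_n|`. -/
noncomputable def lrank {n : ℕ} (x : PartialAut n) : ℕ :=
  Nat.card {l : List Bool | l ∈ x.dom ∧ l.length = n}

/-- The total rank `R'_n`. -/
noncomputable def Rn' (n : ℕ) : ℕ := ∑ x : PartialAut n, lrank x

/-- The action matrix `A_x` of `x` on the bottom level of the tree. -/
noncomputable def actionMatrix {n : ℕ} (x : PartialAut n) : Matrix (Leaf n) (Leaf n) ℂ :=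
  fun i j => if x.toFun i.1 = some j.1 then 1 else 0

/-- The multiset of eigenvalues (with multiplicity) of the action matrix of `x`,
i.e. the roots of its characteristic polynomial. -/
noncomputable def eigenvalues {n : ℕ} (x : PartialAut n) : Multiset ℂ :=
  (actionMatrix x).charpoly.roots

/-- `∫_D f dΞ_n` for the empirical eigenvalue measure
`Ξ_n = 2^{-n} ∑_k δ_{λ_k}` of `x`. -/
noncomputable def specInt {n : ℕ} (x : PartialAut n) (f : ℂ → ℂ) : ℂ :=
  (2 ^ n : ℂ)⁻¹ * ((eigenvalues x).map f).sum

/-- `p_n = R_n / (2^n N_n)`. -/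
noncomputable def pn (n : ℕ) : ℝ := (Rn n : ℝ) / (2 ^ n * Nn n)

/-- The idempotent partial automorphism which is the identity on `dom x`. -/
def PartialAut.domIdem {n : ℕ} (x : PartialAut n) : PartialAut n where
  toFun l := if x.toFun l = none then none else some l
  length_le := by
    intro l m h
    (try dsimp only at h)
    split at h
    · cases h
    · next hx =>
      cases hk : x.toFun l with
      | none => exact absurd hk hx
      | some k => exact x.length_le l k hk
  root_map := by simp [x.root_map]
  child_map := by
    intro l b m h
    (try dsimp only at h ⊢)
    split at h
    · cases h
    · next hx =>
      cases h
      cases hk : x.toFun (l ++ [b]) with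
      | none => exact absurd hk hx
      | some k =>
        obtain ⟨u, b', hu, _⟩ := x.child_map l b k hk
        exact ⟨l, b, by simp [hu], rfl⟩
  inj := by
    intro l l' m h h'
    (try dsimp only at h h')
    split at h
    · cases h
    · cases h
      split at h'
      · cases h'
      · cases h'; rfl

namespace PartialAut

variable {n : ℕ}

theorem head_of_cons (x : PartialAut (n+1)) (b : Bool) :
    ∀ t u, x.toFun (b :: t) = some u → ∃ c s, u = c :: s ∧ x.toFun [b] = some [c] := by
  intro t
  induction t using List.reverseRecOn with
  | nil =>
    intro u h
    have hl : u.length = 1 := by simpa using length_map _ _ h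
    obtain ⟨c, rfl⟩ := List.length_eq_one_iff.mp hl
    exact ⟨c, [], rfl, h⟩
  | append_singleton t a ih =>
    intro u h
    rw [show b :: (t ++ [a]) = (b :: t) ++ [a] by simp] at h
    obtain ⟨u', a', hu', rfl⟩ := x.child_map _ _ _ h
    obtain ⟨c, s, rfl, hc⟩ := ih u' hu'
    exact ⟨c, s ++ [a'], by simp, hc⟩

def subAut (x : PartialAut (n+1)) (b : Bool) (hb : ∃ c, x.toFun [b] = some [c]) :
    PartialAut n where
  toFun t := (x.toFun (b :: t)).bind List.tail?
  length_le := by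
    intro l m h
    cases hx : x.toFun (b :: l) with
    | none => rw [hx] at h; cases h
    | some u =>
      have := x.length_le _ _ hx
      simpa using this
  root_map := by
    obtain ⟨c, hc⟩ := hb
    show (x.toFun [b]).bind List.tail? = some []
    rw [hc]; rfl
  child_map := by
    intro l a m h
    show ∃ u b', (x.toFun (b :: l)).bind List.tail? = some u ∧ m = u ++ [b']
    rw [show b :: (l ++ [a]) = (b :: l) ++ [a] by simp] at h
    cases hx : x.toFun ((b :: l) ++ [a]) with
    | none => rw [hx] at h; cases h
    | some u =>
      rw [hx, Option.bind_some] at h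
      obtain ⟨u', a', hu', rfl⟩ := x.child_map _ _ _ hx
      obtain ⟨c, s, rfl, hc⟩ := head_of_cons x b _ _ hu'
      refine ⟨s, a', ?_, ?_⟩
      · rw [hu']; rfl
      · simpa using h.symm
  inj := by
    intro l l' m h h'
    cases hx : x.toFun (b :: l) with
    | none => rw [hx] at h; cases h
    | some u =>
      cases hx' : x.toFun (b :: l') with
      | none => rw [hx'] at h'; cases h'
      | some u' =>
        rw [hx, Option.bind_some] at h
        rw [hx', Option.bind_some] at h'
        obtain ⟨c, s, rfl, hc⟩ := head_of_cons x b _ _ hx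
        obtain ⟨c', s', rfl, hc'⟩ := head_of_cons x b _ _ hx'
        simp only [List.tail?_cons, Option.some_inj] at h h'
        subst h; subst h'
        have hcc : c = c' := by rw [hc] at hc'; simpa using hc'
        subst hcc
        have := x.inj _ _ _ hx hx'
        simpa using this

noncomputable def destF (x : PartialAut (n+1)) (b : Bool) : Option (Bool × PartialAut n) :=
  if h : ∃ c, x.toFun [b] = some [c] then some (h.choose, subAut x b h) else none

theorem destF_eq_none {x : PartialAut (n+1)} {b : Bool} (h : x.toFun [b] = none) :
    destF x b = none := by
  apply dif_neg
  rintro ⟨c, hc⟩; rw [h] at hc; cases hc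

theorem destF_spec {x : PartialAut (n+1)} {b c : Bool} {y : PartialAut n}
    (h : destF x b = some (c, y)) : x.toFun [b] = some [c] := by
  unfold destF at h
  split at h
  · next he =>
    have hs := he.choose_spec
    rw [Option.some_inj] at h
    injection h with h1 h2
    rw [hs, h1]
  · cases h

theorem toFun_cons (x : PartialAut (n+1)) (b : Bool) (t : List Bool) :
    x.toFun (b :: t) = (destF x b).bind fun p => (p.2.toFun t).map (p.1 :: ·) := by
  unfold destF
  split
  · next h =>
    have hcc : x.toFun [b] = some [h.choose] := h.choose_spec
    show x.toFun (b :: t) = ((x.toFun (b :: t)).bind List.tail?).map (h.choose :: ·)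
    cases hbt : x.toFun (b :: t) with
    | none => rfl
    | some u =>
      obtain ⟨c', s, rfl, hc'⟩ := head_of_cons x b _ _ hbt
      have he : h.choose = c' := by rw [hcc] at hc'; simpa using hc'
      subst he
      rfl
  · next h =>
    cases hbt : x.toFun (b :: t) with
    | some u =>
      exfalso
      obtain ⟨c, s, _, hc⟩ := head_of_cons x b _ _ hbt
      exact h ⟨c, hc⟩
    | none => rfl

def Inj (f : Bool → Option (Bool × PartialAut n)) : Prop :=
  ∀ a a' c y y', f a = some (c, y) → f a' = some (c, y') → a = a'

def glue (f : Bool → Option (Bool × PartialAut n)) (hf : Inj f) : PartialAut (n+1) where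
  toFun l := match l with
    | [] => some []
    | b :: t => (f b).bind fun p => (p.2.toFun t).map (p.1 :: ·)
  length_le := by
    intro l m h
    match l with
    | [] => simp
    | b :: t =>
      dsimp only at h
      cases hfb : f b with
      | none => rw [hfb] at h; cases h
      | some p =>
        rw [hfb, Option.bind_some] at h
        cases hs : p.2.toFun t with
        | none => rw [hs] at h; cases h
        | some s =>
          have := p.2.length_le t s hs
          simpa using this
  root_map := rfl
  child_map := by
    intro l a m h
    match l with
    | [] =>
      simp only [List.nil_append] at h ⊢
      cases hfa : f a with
      | none => rw [hfa] at h; cases h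
      | some p =>
        rw [hfa, Option.bind_some, p.2.root_map] at h
        rw [Option.map_some] at h
        exact ⟨[], p.1, rfl, by simpa using h.symm⟩
    | b :: t =>
      rw [List.cons_append] at h
      dsimp only at h ⊢
      cases hfb : f b with
      | none => rw [hfb] at h; cases h
      | some p =>
        rw [hfb, Option.bind_some] at h
        cases hs : p.2.toFun (t ++ [a]) with
        | none => rw [hs] at h; cases h
        | some s =>
          rw [hs, Option.map_some, Option.some_inj] at h
          obtain ⟨u, a', hu, rfl⟩ := p.2.child_map _ _ _ hs
          refine ⟨p.1 :: u, a', ?_, by rw [← h]; simp⟩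
          rw [Option.bind_some, hu, Option.map_some]
  inj := by
    intro l l' m h h'
    match l, l' with
    | [], [] => rfl
    | [], b :: t =>
      dsimp only at h h'
      rw [Option.some_inj] at h; subst h
      cases hfb : f b with
      | none => rw [hfb] at h'; cases h'
      | some p =>
        rw [hfb, Option.bind_some] at h'
        cases hs : p.2.toFun t with
        | none => rw [hs] at h'; cases h'
        | some s => rw [hs] at h'; cases h'
    | b :: t, [] =>
      dsimp only at h h'
      rw [Option.some_inj] at h'; subst h'
      cases hfb : f b with
      | none => rw [hfb] at h; cases h
      | some p =>
        rw [hfb, Option.bind_some] at h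
        cases hs : p.2.toFun t with
        | none => rw [hs] at h; cases h
        | some s => rw [hs] at h; cases h
    | b :: t, b' :: t' =>
      dsimp only at h h'
      cases hfb : f b with
      | none => rw [hfb] at h; cases h
      | some p =>
        cases hfb' : f b' with
        | none => rw [hfb'] at h'; cases h'
        | some p' =>
          rw [hfb, Option.bind_some] at h
          rw [hfb', Option.bind_some] at h'
          cases hs : p.2.toFun t with
          | none => rw [hs] at h; cases h
          | some s =>
            cases hs' : p'.2.toFun t' with
            | none => rw [hs'] at h'; cases h'
            | some s' =>
              rw [hs, Option.map_some, Option.some_inj] at h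
              rw [hs', Option.map_some, Option.some_inj] at h'
              rw [← h] at h'
              rw [List.cons.injEq] at h'
              obtain ⟨h1, h2⟩ := h'
              have hb : b = b' := hf b b' p.1 p.2 p'.2 (by rw [hfb])
                (by rw [hfb', ← h1])
              subst hb
              rw [hfb] at hfb'
              rw [Option.some_inj] at hfb'
              subst hfb'
              subst h2
              have := p.2.inj _ _ _ hs hs'
              rw [this]

@[simp] theorem glue_toFun_nil {f hf} : (glue (n := n) f hf).toFun [] = some [] := rfl
@[simp] theorem glue_toFun_cons {f hf} (b : Bool) (t : List Bool) :
    (glue (n := n) f hf).toFun (b :: t) = (f b).bind fun p => (p.2.toFun t).map (p.1 :: ·) := rfl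

theorem destF_glue {f : Bool → Option (Bool × PartialAut n)} {hf : Inj f} (b : Bool) :
    destF (glue f hf) b = f b := by
  cases hfb : f b with
  | none =>
    apply destF_eq_none
    show (f b).bind _ = none
    rw [hfb]; rfl
  | some p =>
    have h7 : (glue f hf).toFun [b] = some [p.1] := by
      show (f b).bind _ = _
      rw [hfb, Option.bind_some, p.2.root_map]; rfl
    have hex : ∃ c, (glue f hf).toFun [b] = some [c] := ⟨p.1, h7⟩
    unfold destF
    rw [dif_pos hex]
    have hc : hex.choose = p.1 := by
      simpa using (h7.symm.trans hex.choose_spec).symm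
    have hsub : subAut (glue f hf) b hex = p.2 := by
      apply ext'
      funext t
      show ((glue f hf).toFun (b :: t)).bind List.tail? = p.2.toFun t
      rw [glue_toFun_cons, hfb, Option.bind_some]
      cases hs : p.2.toFun t with
      | none => rfl
      | some s => rfl
    rw [Option.some_inj, hc, hsub]

theorem inj_destF (x : PartialAut (n+1)) : Inj (destF x) := by
  intro a a' c y y' h h'
  have h1 := destF_spec h
  have h2 := destF_spec h'
  have := x.inj _ _ _ h1 h2
  simpa using this

theorem glue_destF (x : PartialAut (n+1)) : glue (destF x) (inj_destF x) = x := by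
  apply ext'
  funext l
  match l with
  | [] => rw [glue_toFun_nil, x.root_map]
  | b :: t => rw [glue_toFun_cons, toFun_cons]

end PartialAut
namespace PartialAut

variable {n : ℕ}

def orb (z : ℕ → PartialAut n) (l : List Bool) : ℕ → Option (List Bool)
  | 0 => some l
  | j+1 => (orb z l j).bind (z j).toFun

def Surv (z : ℕ → PartialAut n) (l : List Bool) : Prop := ∀ j, orb z l j ≠ none

theorem orb_congr {z z' : ℕ → PartialAut n} (h : ∀ j, z j = z' j) (l : List Bool) :
    ∀ j, orb z l j = orb z' l j
  | 0 => rfl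
  | j+1 => by rw [orb, orb, orb_congr h l j, h j]

noncomputable def tOrb (z : ℕ → PartialAut (n+1)) (b : Bool) : ℕ → Option Bool
  | 0 => some b
  | j+1 => (tOrb z b j).bind fun a => (destF (z j) a).map Prod.fst

noncomputable def sSeq (z : ℕ → PartialAut (n+1)) (b : Bool) (j : ℕ) : PartialAut n :=
  ((tOrb z b j).bind fun a => (destF (z j) a).map Prod.snd).getD 1

theorem orb_split (z : ℕ → PartialAut (n+1)) (b : Bool) (t : List Bool) :
    ∀ j, orb z (b :: t) j = (tOrb z b j).bind fun a => (orb (sSeq z b) t j).map (a :: ·)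
  | 0 => rfl
  | j+1 => by
    rw [orb, orb_split z b t j, tOrb, orb]
    cases htop : tOrb z b j with
    | none => rfl
    | some a =>
      cases hbot : orb (sSeq z b) t j with
      | none => cases hd : destF (z j) a <;> simp [hd]
      | some s =>
        simp only [Option.bind_some, Option.map_some]
        rw [toFun_cons]
        cases hd : destF (z j) a with
        | none => simp [hd]
        | some p =>
          have hs : sSeq z b j = p.2 := by
            unfold sSeq
            rw [htop]
            simp [hd]
          simp [hd, hs]

theorem surv_cons_iff (z : ℕ → PartialAut (n+1)) (b : Bool) (t : List Bool) :
    Surv z (b :: t) ↔ (∀ j, tOrb z b j ≠ none) ∧ Surv (sSeq z b) t := by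
  constructor
  · intro h
    constructor
    · intro j hj
      have := h j
      rw [orb_split, hj] at this
      exact this rfl
    · intro j hj
      have := h j
      rw [orb_split, hj] at this
      apply this
      cases tOrb z b j <;> rfl
  · rintro ⟨h1, h2⟩ j
    rw [orb_split]
    cases htop : tOrb z b j with
    | none => exact absurd htop (h1 j)
    | some a =>
      cases hbot : orb (sSeq z b) t j with
      | none => exact absurd hbot (h2 j)
      | some s => simp

theorem tOrb_add (z : ℕ → PartialAut (n+1)) (b : Bool) (i : ℕ) :
    ∀ j, tOrb z b (i + j) = (tOrb z b i).bind fun a => tOrb (fun m => z (i + m)) a j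
  | 0 => by rw [Nat.add_zero]; cases htop : tOrb z b i <;> simp [htop, tOrb]
  | j+1 => by
    rw [show i + (j+1) = (i + j) + 1 from rfl, tOrb, tOrb_add z b i j]
    cases htop : tOrb z b i with
    | none => rfl
    | some a => rw [Option.bind_some, Option.bind_some, tOrb]

theorem pat_inj {z : PartialAut (n+1)} {a a' c : Bool}
    (h : (destF z a).map Prod.fst = some c) (h' : (destF z a').map Prod.fst = some c) :
    a = a' := by
  cases hd : destF z a with
  | none => rw [hd] at h; cases h
  | some p =>
    cases hd' : destF z a' with
    | none => rw [hd'] at h'; cases h'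
    | some p' =>
      rw [hd, Option.map_some, Option.some_inj] at h
      rw [hd', Option.map_some, Option.some_inj] at h'
      exact inj_destF z a a' c p.2 p'.2 (by rw [hd, ← h]) (by rw [hd', ← h'])

section Classify

variable {k : ℕ} {z : ℕ → PartialAut (n+1)} {b : Bool}
  (hz : ∀ j, z (j + k) = z j)

include hz

theorem shift_eq : (fun m => z (k + m)) = z := by
  funext m
  have := hz m
  rwa [Nat.add_comm m k] at this

theorem tOrb_caseA (hbk : tOrb z b k = some b) (j : ℕ) :
    tOrb z b (k + j) = tOrb z b j := by
  rw [tOrb_add, hbk, Option.bind_some, shift_eq hz]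

theorem tOrb_caseB (TS : ∀ j, tOrb z b j ≠ none) (hbk : tOrb z b k = some (!b)) (j : ℕ) :
    tOrb z b (k + j) = (tOrb z b j).map not := by
  induction j with
  | zero => rw [Nat.add_zero, hbk]; rfl
  | succ j ih =>
    obtain ⟨a, ha⟩ := Option.ne_none_iff_exists'.mp (TS j)
    obtain ⟨c, hc⟩ := Option.ne_none_iff_exists'.mp (TS (j+1))
    obtain ⟨c', hc'⟩ := Option.ne_none_iff_exists'.mp (TS (k + (j+1)))
    have hstep : (destF (z j) a).map Prod.fst = some c := by
      rw [tOrb, ha, Option.bind_some] at hc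
      exact hc
    have hstep' : (destF (z j) (!a)).map Prod.fst = some c' := by
      have h2 : tOrb z b (k + (j+1)) = (destF (z (k+j)) (!a)).map Prod.fst := by
        rw [show k + (j+1) = (k+j)+1 from rfl, tOrb, ih, ha]
        rfl
      rw [h2] at hc'
      rw [show z (k+j) = z j from by have := hz j; rwa [Nat.add_comm j k] at this] at hc'
      exact hc'
    have hne : c' ≠ c := by
      intro he
      rw [he] at hstep'
      have := pat_inj hstep' hstep
      simp at this
    rw [hc', hc, Option.map_some]
    congr 1
    cases c <;> cases c' <;> simp_all

omit hz in
theorem tOrb_k_cases (TS : ∀ j, tOrb z b j ≠ none) :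
    tOrb z b k = some b ∨ tOrb z b k = some (!b) := by
  obtain ⟨c, hc⟩ := Option.ne_none_iff_exists'.mp (TS k)
  cases b <;> cases c <;> simp_all

theorem sSeq_caseA (hbk : tOrb z b k = some b) (j : ℕ) :
    sSeq z b (j + k) = sSeq z b j := by
  unfold sSeq
  rw [Nat.add_comm j k, tOrb_caseA hz hbk,
    show z (k + j) = z j from by have := hz j; rwa [Nat.add_comm j k] at this]

theorem sSeq_caseB (TS : ∀ j, tOrb z b j ≠ none) (hbk : tOrb z b k = some (!b)) (j : ℕ) :
    sSeq z b (j + 2*k) = sSeq z b j := by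
  unfold sSeq
  have h1 : tOrb z b (j + 2*k) = tOrb z b j := by
    rw [show j + 2*k = k + (k + j) from by ring, tOrb_caseB hz TS hbk,
      tOrb_caseB hz TS hbk]
    cases tOrb z b j <;> simp
  have h2 : z (j + 2*k) = z j := by
    rw [show j + 2*k = (j + k) + k from by ring, hz, hz]
  rw [h1, h2]

end Classify

end PartialAut
namespace PartialAut

variable {n : ℕ}

def SP (k n : ℕ) : Type :=
  {p : {z : ℕ → PartialAut n // ∀ j, z (j + k) = z j} × Leaf n // Surv p.1.1 p.2.1}

noncomputable def Qk (k n : ℕ) : ℕ := Nat.card (SP k n)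

theorem orb_pow (x : PartialAut n) {l : List Bool} (hl : l.length ≤ n) :
    ∀ j, orb (fun _ => x) l j = (x ^ j).toFun l
  | 0 => by rw [orb, pow_zero, one_toFun, if_pos hl]
  | j+1 => by rw [orb, orb_pow x hl j, pow_succ, mul_toFun]

theorem per1_const {α : Type*} {z : ℕ → α} (hz : ∀ j, z (j + 1) = z j) :
    ∀ j, z j = z 0
  | 0 => rfl
  | j+1 => by rw [hz j, per1_const hz j]

instance survSet_finite (x : PartialAut n) : Finite ↥(survSet x) :=
  Set.Finite.to_subtype <| (List.finite_length_eq Bool n).subset fun _ hl => hl.1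

theorem nat_card_sigma {ι : Type*} [Fintype ι] (f : ι → Type*) [∀ i, Finite (f i)] :
    Nat.card (Σ i, f i) = ∑ i, Nat.card (f i) := by
  letI : ∀ i, Fintype (f i) := fun i => Fintype.ofFinite _
  simp only [Nat.card_eq_fintype_card]
  exact Fintype.card_sigma

noncomputable def spOneEquiv (n : ℕ) : (Σ x : PartialAut n, ↥(survSet x)) ≃ SP 1 n where
  toFun p :=
    ⟨(⟨fun _ => p.1, fun _ => rfl⟩, ⟨p.2.1, p.2.2.1⟩), by
      intro j
      rw [orb_pow p.1 (le_of_eq p.2.2.1) j]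
      match j with
      | 0 => rw [pow_zero, one_toFun, if_pos (le_of_eq p.2.2.1)]; exact Option.some_ne_none _
      | j+1 => exact p.2.2.2 (j+1) (Nat.succ_le_succ (Nat.zero_le j))⟩
  invFun p :=
    ⟨p.1.1.1 0, p.1.2.1, p.1.2.2, by
      intro m hm
      have hconst : ∀ j, orb (fun _ => p.1.1.1 0) p.1.2.1 j = orb p.1.1.1 p.1.2.1 j :=
        orb_congr (fun j => (per1_const p.1.1.2 j).symm) _
      have := p.2 m
      rw [← hconst m, orb_pow (p.1.1.1 0) (le_of_eq p.1.2.2) m] at this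
      exact this⟩
  left_inv p := rfl
  right_inv p := by
    apply Subtype.ext
    apply Prod.ext
    · apply Subtype.ext
      funext j
      exact (per1_const p.1.1.2 j).symm
    · rfl

theorem Rn_eq_Qk (n : ℕ) : Rn n = Qk 1 n := by
  rw [Qk, ← Nat.card_congr (spOneEquiv n), nat_card_sigma]
  rfl

theorem orb_nil (z : ℕ → PartialAut n) : ∀ j, orb z [] j = some []
  | 0 => rfl
  | j+1 => by rw [orb, orb_nil z j, Option.bind_some, (z j).root_map]

instance : Subsingleton (PartialAut 0) := by
  constructor
  intro x y
  apply ext'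
  funext l
  match l with
  | [] => rw [x.root_map, y.root_map]
  | b :: t =>
    rw [toFun_eq_none (by simp), toFun_eq_none (by simp)]

instance (k : ℕ) : Unique (SP k 0) where
  default := ⟨(⟨fun _ => 1, fun _ => rfl⟩, ⟨[], rfl⟩), fun j => by
    rw [orb_nil]; exact Option.some_ne_none _⟩
  uniq := by
    intro a
    apply Subtype.ext
    apply Prod.ext
    · apply Subtype.ext
      funext j
      exact Subsingleton.elim _ _
    · apply Subtype.ext
      have h0 := a.1.2.2
      have h1 : a.1.2.1 = [] := List.length_eq_zero_iff.mp h0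
      rw [h1]

theorem Qk_zero (k : ℕ) : Qk k 0 = 1 := by
  rw [Qk]
  exact Nat.card_unique

theorem per_mod {α : Type*} {k : ℕ} {f : ℕ → α} (hf : ∀ j, f (j + k) = f j) (hk : 0 < k) :
    ∀ j, f j = f (j % k) := by
  intro j
  induction j using Nat.strong_induction_on with
  | _ j ih =>
    by_cases h : j < k
    · rw [Nat.mod_eq_of_lt h]
    · push_neg at h
      have h1 : j - k + k = j := Nat.sub_add_cancel h
      have h2 := hf (j - k)
      rw [h1] at h2
      rw [h2, ih (j - k) (by omega), Nat.mod_eq_sub_mod h]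

noncomputable def perEquiv {α : Type*} (k : ℕ) (hk : 0 < k) :
    {f : ℕ → α // ∀ j, f (j + k) = f j} ≃ (Fin k → α) where
  toFun f i := f.1 i
  invFun g := ⟨fun j => g ⟨j % k, Nat.mod_lt j hk⟩, fun j => by
    simp only [Nat.add_mod_right]⟩
  left_inv f := by
    apply Subtype.ext
    funext j
    exact (per_mod f.2 hk j).symm
  right_inv g := by
    funext i
    show g ⟨i.1 % k, Nat.mod_lt _ hk⟩ = g i
    exact congrArg g (Fin.ext (Nat.mod_eq_of_lt i.2))

theorem aper_mod {k : ℕ} {f : ℕ → Bool} (hf : ∀ j, f (j + k) = !f j) (hk : 0 < k) :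
    ∀ j, f j = xor (decide ((j / k) % 2 = 1)) (f (j % k)) := by
  intro j
  induction j using Nat.strong_induction_on with
  | _ j ih =>
    by_cases h : j < k
    · rw [Nat.mod_eq_of_lt h, Nat.div_eq_of_lt h]
      simp
    · push_neg at h
      have h1 : j - k + k = j := Nat.sub_add_cancel h
      have h2 := hf (j - k)
      rw [h1] at h2
      have h3 : j / k = (j - k) / k + 1 := by
        rw [← Nat.add_div_right (j - k) hk, h1]
      rw [h2, ih (j - k) (by omega), Nat.mod_eq_sub_mod h, h3]
      rcases Nat.mod_two_eq_zero_or_one ((j - k) / k) with h4 | h4 <;>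
        simp [h4, Nat.add_mod]

noncomputable def aperEquiv (k : ℕ) (hk : 0 < k) :
    {f : ℕ → Bool // ∀ j, f (j + k) = !f j} ≃ (Fin k → Bool) where
  toFun f i := f.1 i
  invFun g := ⟨fun j => xor (decide ((j / k) % 2 = 1)) (g ⟨j % k, Nat.mod_lt j hk⟩), fun j => by
    simp only [Nat.add_mod_right, Nat.add_div_right _ hk]
    rcases Nat.mod_two_eq_zero_or_one (j / k) with h4 | h4 <;>
      simp [h4, Nat.add_mod]⟩
  left_inv f := by
    apply Subtype.ext
    funext j
    exact (aper_mod f.2 hk j).symm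
  right_inv g := by
    funext i
    have h1 : (⟨i.1 % k, Nat.mod_lt _ hk⟩ : Fin k) = i := Fin.ext (Nat.mod_eq_of_lt i.2)
    have h2 : i.1 / k = 0 := Nat.div_eq_of_lt i.2
    show xor (decide ((i.1 / k) % 2 = 1)) (g ⟨i.1 % k, Nat.mod_lt _ hk⟩) = g i
    rw [h1, h2]
    simp

end PartialAut
namespace PartialAut

variable {n k : ℕ}

theorem glue_congr {f g : Bool → Option (Bool × PartialAut n)} {hf : Inj f} {hg : Inj g}
    (h : f = g) : glue f hf = glue g hg := by subst h; rfl

def ADat (k n : ℕ) : Type :=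
  ({o : ℕ → Bool // ∀ j, o (j + k) = o j} ×
   {e : ℕ → Option (PartialAut n) // ∀ j, e (j + k) = e j}) × SP k n

def BDat (k n : ℕ) : Type :=
  {o : ℕ → Bool // ∀ j, o (j + k) = !o j} × SP (2 * k) n

noncomputable def fA (o : ℕ → Bool) (e : ℕ → Option (PartialAut n)) (v : ℕ → PartialAut n)
    (j : ℕ) : Bool → Option (Bool × PartialAut n) := fun a =>
  if a = o j then some (o (j+1), v j)
  else (e j).map fun y => (!o (j+1), y)

theorem fA_inj (o : ℕ → Bool) (e : ℕ → Option (PartialAut n)) (v : ℕ → PartialAut n)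
    (j : ℕ) : Inj (fA o e v j) := by
  intro a a' c y y' h h'
  unfold fA at h h'
  cases he : e j <;> rw [he] at h h' <;>
    cases a <;> cases a' <;> cases hoj : o j <;> rw [hoj] at h h' <;>
    simp_all

noncomputable def fB (o : ℕ → Bool) (v : ℕ → PartialAut n) (k j : ℕ) :
    Bool → Option (Bool × PartialAut n) := fun a =>
  if a = o j then some (o (j+1), v j) else some (!o (j+1), v (j+k))

theorem fB_inj (o : ℕ → Bool) (v : ℕ → PartialAut n) (k j : ℕ) : Inj (fB o v k j) := by
  intro a a' c y y' h h'
  unfold fB at h h'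
  cases a <;> cases a' <;> cases hoj : o j <;> rw [hoj] at h h' <;>
    simp_all

noncomputable def wA (o : ℕ → Bool) (e : ℕ → Option (PartialAut n)) (v : ℕ → PartialAut n)
    (j : ℕ) : PartialAut (n+1) := glue (fA o e v j) (fA_inj o e v j)

noncomputable def wB (o : ℕ → Bool) (v : ℕ → PartialAut n) (k j : ℕ) :
    PartialAut (n+1) := glue (fB o v k j) (fB_inj o v k j)

theorem tOrb_wA (o : ℕ → Bool) (e : ℕ → Option (PartialAut n)) (v : ℕ → PartialAut n) :
    ∀ j, tOrb (fun i => wA o e v i) (o 0) j = some (o j)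
  | 0 => rfl
  | j+1 => by
    rw [tOrb, tOrb_wA o e v j, Option.bind_some,
      show destF (wA o e v j) (o j) = fA o e v j (o j) from destF_glue _]
    unfold fA
    rw [if_pos rfl, Option.map_some]

theorem sSeq_wA (o : ℕ → Bool) (e : ℕ → Option (PartialAut n)) (v : ℕ → PartialAut n)
    (j : ℕ) : sSeq (fun i => wA o e v i) (o 0) j = v j := by
  unfold sSeq
  rw [tOrb_wA, Option.bind_some,
    show destF (wA o e v j) (o j) = fA o e v j (o j) from destF_glue _]
  unfold fA
  rw [if_pos rfl, Option.map_some]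
  rfl

theorem tOrb_wB (o : ℕ → Bool) (v : ℕ → PartialAut n) (k : ℕ) :
    ∀ j, tOrb (fun i => wB o v k i) (o 0) j = some (o j)
  | 0 => rfl
  | j+1 => by
    rw [tOrb, tOrb_wB o v k j, Option.bind_some,
      show destF (wB o v k j) (o j) = fB o v k j (o j) from destF_glue _]
    unfold fB
    rw [if_pos rfl, Option.map_some]

theorem sSeq_wB (o : ℕ → Bool) (v : ℕ → PartialAut n) (k j : ℕ) :
    sSeq (fun i => wB o v k i) (o 0) j = v j := by
  unfold sSeq
  rw [tOrb_wB, Option.bind_some,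
    show destF (wB o v k j) (o j) = fB o v k j (o j) from destF_glue _]
  unfold fB
  rw [if_pos rfl, Option.map_some]
  rfl

noncomputable def asmA : ADat k n → SP k (n+1) := fun d =>
  match d with
  | ((⟨o, ho⟩, ⟨e, he⟩), ⟨(⟨v, hv⟩, ⟨t, ht⟩), hs⟩) =>
    ⟨(⟨fun j => wA o e v j, fun j => by
        apply glue_congr
        funext a
        unfold fA
        rw [ho j, show o (j + k + 1) = o (j+1) from by
            rw [show j + k + 1 = (j+1) + k from by ring]; exact ho (j+1),
          he j, hv j]⟩,
      ⟨o 0 :: t, by rw [List.length_cons, ht]⟩), by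
      rw [surv_cons_iff]
      constructor
      · intro j
        rw [tOrb_wA]
        exact Option.some_ne_none _
      · intro j
        rw [orb_congr (fun i => sSeq_wA o e v i) t j]
        exact hs j⟩

noncomputable def asmB : BDat k n → SP k (n+1) := fun d =>
  match d with
  | (⟨o, ho⟩, ⟨(⟨v, hv⟩, ⟨t, ht⟩), hs⟩) =>
    ⟨(⟨fun j => wB o v k j, fun j => by
        apply glue_congr
        funext a
        have h1 : o (j + k) = !o j := ho j
        have h2 : o (j + k + 1) = !o (j+1) := by
          rw [show j + k + 1 = (j+1) + k from by ring]; exact ho (j+1)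
        have h3 : v (j + k + k) = v j := by
          rw [show j + k + k = j + 2*k from by ring]; exact hv j
        unfold fB
        rw [h1, h2, h3]
        by_cases hao : a = o j
        · rw [if_neg (by rw [hao]; exact Bool.self_ne_not _), if_pos hao, Bool.not_not]
        · rw [if_pos (Bool.eq_not_iff.mpr hao), if_neg hao]⟩,
      ⟨o 0 :: t, by rw [List.length_cons, ht]⟩), by
      rw [surv_cons_iff]
      constructor
      · intro j
        rw [tOrb_wB]
        exact Option.some_ne_none _
      · intro j
        rw [orb_congr (fun i => sSeq_wB o v k i) t j]
        exact hs j⟩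

noncomputable def asm : ADat k n ⊕ BDat k n → SP k (n+1) := Sum.elim asmA asmB

end PartialAut
namespace PartialAut

variable {n k : ℕ}

theorem asm_inj : Function.Injective (asm : ADat k n ⊕ BDat k n → SP k (n+1)) := by
  rintro (⟨⟨⟨o1,ho1⟩,⟨e1,he1⟩⟩, ⟨⟨⟨v1,hv1⟩,⟨t1,ht1⟩⟩, hs1⟩⟩ | ⟨⟨o1,ho1⟩, ⟨⟨⟨v1,hv1⟩,⟨t1,ht1⟩⟩, hs1⟩⟩)
      (⟨⟨⟨o2,ho2⟩,⟨e2,he2⟩⟩, ⟨⟨⟨v2,hv2⟩,⟨t2,ht2⟩⟩, hs2⟩⟩ | ⟨⟨o2,ho2⟩, ⟨⟨⟨v2,hv2⟩,⟨t2,ht2⟩⟩, hs2⟩⟩) h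
  · -- A A
    have hh := Subtype.ext_iff.mp h
    have hseq : ∀ j, wA o1 e1 v1 j = wA o2 e2 v2 j :=
      fun j => congrFun (Subtype.ext_iff.mp (congrArg Prod.fst hh)) j
    have hleaf : o1 0 :: t1 = o2 0 :: t2 := Subtype.ext_iff.mp (congrArg Prod.snd hh)
    simp only [List.cons.injEq] at hleaf
    obtain ⟨hb0, hteq⟩ := hleaf
    have hf : ∀ j (a : Bool), fA o1 e1 v1 j a = fA o2 e2 v2 j a := by
      intro j a
      calc fA o1 e1 v1 j a = destF (wA o1 e1 v1 j) a := (destF_glue a).symm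
        _ = destF (wA o2 e2 v2 j) a := by rw [hseq j]
        _ = fA o2 e2 v2 j a := destF_glue a
    have hov : ∀ j, o1 j = o2 j ∧ v1 j = v2 j := by
      intro j
      induction j with
      | zero =>
        have h1 := hf 0 (o1 0)
        unfold fA at h1
        rw [if_pos rfl, if_pos hb0] at h1
        simp only [Option.some.injEq, Prod.mk.injEq] at h1
        exact ⟨hb0, h1.2⟩
      | succ j ih =>
        have h1 := hf j (o1 j)
        unfold fA at h1
        rw [if_pos rfl, if_pos ih.1] at h1
        simp only [Option.some.injEq, Prod.mk.injEq] at h1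
        have h2 := hf (j+1) (o1 (j+1))
        unfold fA at h2
        rw [if_pos rfl, if_pos h1.1] at h2
        simp only [Option.some.injEq, Prod.mk.injEq] at h2
        exact ⟨h1.1, h2.2⟩
    have he : ∀ j, e1 j = e2 j := by
      intro j
      have h1 := hf j (!o1 j)
      unfold fA at h1
      rw [if_neg (Bool.not_ne_self _), if_neg (by rw [(hov j).1]; exact Bool.not_ne_self _)]
        at h1
      cases he1j : e1 j <;> cases he2j : e2 j <;> rw [he1j, he2j] at h1 <;>
        simp_all
    have HO : o1 = o2 := funext fun j => (hov j).1
    have HV : v1 = v2 := funext fun j => (hov j).2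
    have HE : e1 = e2 := funext he
    subst HO; subst HV; subst HE; subst hteq
    rfl
  · -- A B : contradiction
    exfalso
    have hh := Subtype.ext_iff.mp h
    have hseq : ∀ j, wA o1 e1 v1 j = wB o2 v2 k j :=
      fun j => congrFun (Subtype.ext_iff.mp (congrArg Prod.fst hh)) j
    have hleaf : o1 0 :: t1 = o2 0 :: t2 := Subtype.ext_iff.mp (congrArg Prod.snd hh)
    simp only [List.cons.injEq] at hleaf
    obtain ⟨hb0, hteq⟩ := hleaf
    have hf : ∀ j (a : Bool), fA o1 e1 v1 j a = fB o2 v2 k j a := by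
      intro j a
      calc fA o1 e1 v1 j a = destF (wA o1 e1 v1 j) a := (destF_glue a).symm
        _ = destF (wB o2 v2 k j) a := by rw [hseq j]
        _ = fB o2 v2 k j a := destF_glue a
    have ho : ∀ j, o1 j = o2 j := by
      intro j
      induction j with
      | zero => exact hb0
      | succ j ih =>
        have h1 := hf j (o1 j)
        unfold fA fB at h1
        rw [if_pos rfl, if_pos ih] at h1
        simp only [Option.some.injEq, Prod.mk.injEq] at h1
        exact h1.1
    have h1 : o1 (0 + k) = o1 0 := ho1 0
    have h2 : o2 (0 + k) = !o2 0 := ho2 0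
    rw [ho (0 + k), h2, ← hb0] at h1
    exact Bool.not_ne_self _ h1
  · -- B A : contradiction
    exfalso
    have hh := Subtype.ext_iff.mp h
    have hseq : ∀ j, wB o1 v1 k j = wA o2 e2 v2 j :=
      fun j => congrFun (Subtype.ext_iff.mp (congrArg Prod.fst hh)) j
    have hleaf : o1 0 :: t1 = o2 0 :: t2 := Subtype.ext_iff.mp (congrArg Prod.snd hh)
    simp only [List.cons.injEq] at hleaf
    obtain ⟨hb0, hteq⟩ := hleaf
    have hf : ∀ j (a : Bool), fB o1 v1 k j a = fA o2 e2 v2 j a := by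
      intro j a
      calc fB o1 v1 k j a = destF (wB o1 v1 k j) a := (destF_glue a).symm
        _ = destF (wA o2 e2 v2 j) a := by rw [hseq j]
        _ = fA o2 e2 v2 j a := destF_glue a
    have ho : ∀ j, o1 j = o2 j := by
      intro j
      induction j with
      | zero => exact hb0
      | succ j ih =>
        have h1 := hf j (o1 j)
        unfold fA fB at h1
        rw [if_pos rfl, if_pos ih] at h1
        simp only [Option.some.injEq, Prod.mk.injEq] at h1
        exact h1.1
    have h1 : o1 (0 + k) = !o1 0 := ho1 0
    have h2 : o2 (0 + k) = o2 0 := ho2 0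
    rw [ho (0 + k), h2, ← hb0] at h1
    exact Bool.self_ne_not _ h1
  · -- B B
    have hh := Subtype.ext_iff.mp h
    have hseq : ∀ j, wB o1 v1 k j = wB o2 v2 k j :=
      fun j => congrFun (Subtype.ext_iff.mp (congrArg Prod.fst hh)) j
    have hleaf : o1 0 :: t1 = o2 0 :: t2 := Subtype.ext_iff.mp (congrArg Prod.snd hh)
    simp only [List.cons.injEq] at hleaf
    obtain ⟨hb0, hteq⟩ := hleaf
    have hf : ∀ j (a : Bool), fB o1 v1 k j a = fB o2 v2 k j a := by
      intro j a
      calc fB o1 v1 k j a = destF (wB o1 v1 k j) a := (destF_glue a).symm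
        _ = destF (wB o2 v2 k j) a := by rw [hseq j]
        _ = fB o2 v2 k j a := destF_glue a
    have hov : ∀ j, o1 j = o2 j ∧ v1 j = v2 j := by
      intro j
      induction j with
      | zero =>
        have h1 := hf 0 (o1 0)
        unfold fB at h1
        rw [if_pos rfl, if_pos hb0] at h1
        simp only [Option.some.injEq, Prod.mk.injEq] at h1
        exact ⟨hb0, h1.2⟩
      | succ j ih =>
        have h1 := hf j (o1 j)
        unfold fB at h1
        rw [if_pos rfl, if_pos ih.1] at h1
        simp only [Option.some.injEq, Prod.mk.injEq] at h1
        have h2 := hf (j+1) (o1 (j+1))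
        unfold fB at h2
        rw [if_pos rfl, if_pos h1.1] at h2
        simp only [Option.some.injEq, Prod.mk.injEq] at h2
        exact ⟨h1.1, h2.2⟩
    have HO : o1 = o2 := funext fun j => (hov j).1
    have HV : v1 = v2 := funext fun j => (hov j).2
    subst HO; subst HV; subst hteq
    rfl

end PartialAut
namespace PartialAut

variable {n k : ℕ}

theorem asm_surj (hk : 0 < k) :
    Function.Surjective (asm : ADat k n ⊕ BDat k n → SP k (n+1)) := by
  rintro ⟨⟨⟨z, hz⟩, ⟨l, hlen⟩⟩, hs⟩
  cases l with
  | nil => simp at hlen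
  | cons b t =>
    have htlen : t.length = n := by simpa using hlen
    have hs' : Surv z (b :: t) := hs
    rw [surv_cons_iff] at hs'
    obtain ⟨TS, hsub⟩ := hs'
    set o : ℕ → Bool := fun j => (tOrb z b j).getD true with ho_def
    have hoo : ∀ j, tOrb z b j = some (o j) := by
      intro j
      obtain ⟨a, ha⟩ := Option.ne_none_iff_exists'.mp (TS j)
      rw [ho_def]
      dsimp only
      rw [ha]
      rfl
    have hb0 : o 0 = b := rfl
    have hstep : ∀ j, destF (z j) (o j) = some (o (j+1), sSeq z b j) := by
      intro j
      have h1 : tOrb z b (j+1) = some (o (j+1)) := hoo (j+1)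
      rw [tOrb, hoo j, Option.bind_some] at h1
      cases hd : destF (z j) (o j) with
      | none => rw [hd] at h1; cases h1
      | some q =>
        rw [hd, Option.map_some, Option.some_inj] at h1
        have h2 : sSeq z b j = q.2 := by
          unfold sSeq
          rw [hoo j, Option.bind_some, hd, Option.map_some]
          rfl
        rw [h2, ← h1]
    rcases tOrb_k_cases (z := z) (b := b) TS with hbk | hbk
    · -- case A
      have hoper : ∀ j, o (j + k) = o j := by
        intro j
        show (tOrb z b (j+k)).getD true = (tOrb z b j).getD true
        rw [show j + k = k + j from Nat.add_comm j k, tOrb_caseA hz hbk]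
      have heper : ∀ j, ((destF (z (j+k)) (!o (j+k))).map Prod.snd)
          = ((destF (z j) (!o j)).map Prod.snd) := by
        intro j
        rw [hz j, hoper j]
      refine ⟨Sum.inl ((⟨o, hoper⟩, ⟨fun j => (destF (z j) (!o j)).map Prod.snd, heper⟩),
        ⟨(⟨sSeq z b, sSeq_caseA hz hbk⟩, ⟨t, htlen⟩), hsub⟩), ?_⟩
      simp only [asm, Sum.elim_inl]
      apply Subtype.ext
      apply Prod.ext
      · apply Subtype.ext
        funext j
        show wA o (fun j => (destF (z j) (!o j)).map Prod.snd) (sSeq z b) j = z j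
        conv_rhs => rw [← glue_destF (z j)]
        apply glue_congr
        funext a
        by_cases ha : a = o j
        · rw [ha]
          unfold fA
          rw [if_pos rfl, hstep j]
        · have ha' : a = !o j := Bool.eq_not_iff.mpr ha
          rw [ha']
          unfold fA
          rw [if_neg (Bool.not_ne_self _)]
          cases hd : destF (z j) (!o j) with
          | none => dsimp only; rw [hd]; rfl
          | some q =>
            have hq1 : q.1 = !o (j+1) := by
              have hfst : (destF (z j) (!o j)).map Prod.fst = some q.1 := by
                rw [hd]; rfl
              have hfst2 : (destF (z j) (o j)).map Prod.fst = some (o (j+1)) := by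
                rw [hstep j]; rfl
              by_contra hne
              have hq : q.1 = o (j+1) := Bool.ne_not.mp hne
              rw [hq] at hfst
              exact (Bool.not_ne_self (o j)) (pat_inj hfst hfst2)
            dsimp only
            rw [hd, Option.map_some, Option.map_some, ← hq1]
      · apply Subtype.ext
        show o 0 :: t = b :: t
        rfl
    · -- case B
      have hoaper : ∀ j, o (j + k) = !o j := by
        intro j
        show (tOrb z b (j+k)).getD true = !(tOrb z b j).getD true
        rw [show j + k = k + j from Nat.add_comm j k, tOrb_caseB hz TS hbk, hoo j]
        rfl
      have hstep2 : ∀ j, destF (z j) (!o j) = some (!o (j+1), sSeq z b (j+k)) := by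
        intro j
        have h1 : tOrb z b (k+j) = some (!o j) := by
          rw [tOrb_caseB hz TS hbk, hoo j]; rfl
        have h2 : tOrb z b (k+(j+1)) = some (!o (j+1)) := by
          rw [tOrb_caseB hz TS hbk, hoo (j+1)]; rfl
        rw [show k+(j+1) = (k+j)+1 from rfl, tOrb, h1, Option.bind_some,
          show z (k+j) = z j from by have := hz j; rwa [Nat.add_comm j k] at this] at h2
        cases hd : destF (z j) (!o j) with
        | none => rw [hd] at h2; cases h2
        | some q =>
          rw [hd, Option.map_some, Option.some_inj] at h2
          have h3 : sSeq z b (j+k) = q.2 := by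
            unfold sSeq
            rw [show j + k = k + j from Nat.add_comm j k, h1, Option.bind_some,
              show z (k+j) = z j from by have := hz j; rwa [Nat.add_comm j k] at this,
              hd, Option.map_some]
            rfl
          rw [h3, ← h2]
      refine ⟨Sum.inr (⟨o, hoaper⟩,
        ⟨(⟨sSeq z b, sSeq_caseB hz TS hbk⟩, ⟨t, htlen⟩), hsub⟩), ?_⟩
      simp only [asm, Sum.elim_inr]
      apply Subtype.ext
      apply Prod.ext
      · apply Subtype.ext
        funext j
        show wB o (sSeq z b) k j = z j
        conv_rhs => rw [← glue_destF (z j)]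
        apply glue_congr
        funext a
        by_cases ha : a = o j
        · rw [ha]
          unfold fB
          rw [if_pos rfl, hstep j]
        · have ha' : a = !o j := Bool.eq_not_iff.mpr ha
          rw [ha']
          unfold fB
          rw [if_neg (Bool.not_ne_self _), hstep2 j]
      · apply Subtype.ext
        show o 0 :: t = b :: t
        rfl

end PartialAut
namespace PartialAut

variable {n k : ℕ}

instance : Unique (PartialAut 0) := ⟨⟨1⟩, fun x => Subsingleton.elim x 1⟩

instance (n : ℕ) : Nonempty (PartialAut n) := ⟨1⟩

theorem glue_inj_data {f g : Bool → Option (Bool × PartialAut n)} {hf : Inj f} {hg : Inj g}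
    (h : glue f hf = glue g hg) (b : Bool) : f b = g b := by
  rw [← destF_glue (hf := hf) b, ← destF_glue (hf := hg) b, h]

theorem finite_per {α : Type*} [Finite α] {k : ℕ} (hk : 0 < k) :
    Finite {f : ℕ → α // ∀ j, f (j + k) = f j} := Finite.of_equiv _ (perEquiv k hk).symm

theorem finite_aper {k : ℕ} (hk : 0 < k) :
    Finite {f : ℕ → Bool // ∀ j, f (j + k) = !f j} := Finite.of_equiv _ (aperEquiv k hk).symm

theorem finite_SP (hk : 0 < k) (n : ℕ) : Finite (SP k n) := by
  haveI := finite_per (α := PartialAut n) hk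
  unfold SP
  infer_instance

theorem card_per {α : Type*} [Finite α] (hk : 0 < k) :
    Nat.card {f : ℕ → α // ∀ j, f (j + k) = f j} = Nat.card α ^ k := by
  rw [Nat.card_congr (perEquiv k hk), Nat.card_fun]
  congr 1
  simp [Nat.card_eq_fintype_card]

theorem card_aper (hk : 0 < k) :
    Nat.card {f : ℕ → Bool // ∀ j, f (j + k) = !f j} = 2 ^ k := by
  rw [Nat.card_congr (aperEquiv k hk), Nat.card_fun]
  simp [Nat.card_eq_fintype_card]

theorem Qk_rec (hk : 0 < k) (n : ℕ) :
    Qk k (n+1) = 2^k * ((Nat.card (PartialAut n) + 1)^k * Qk k n + Qk (2*k) n) := by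
  haveI := finite_SP hk n
  haveI := finite_SP (k := 2*k) (by omega) n
  haveI := finite_per (α := PartialAut n) hk
  haveI := finite_per (α := Option (PartialAut n)) hk
  haveI := finite_per (α := Bool) hk
  haveI := finite_aper hk
  haveI : Finite (ADat k n) := by unfold ADat; infer_instance
  haveI : Finite (BDat k n) := by unfold BDat; infer_instance
  have e := Equiv.ofBijective _ ⟨asm_inj (k := k) (n := n), asm_surj hk⟩
  rw [Qk, ← Nat.card_congr e, Nat.card_sum]
  have hA : Nat.card (ADat k n) = 2^k * ((Nat.card (PartialAut n) + 1)^k * Qk k n) := by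
    unfold ADat
    rw [Nat.card_prod, Nat.card_prod, card_per hk, card_per hk, Finite.card_option]
    rw [show Nat.card Bool = 2 by simp [Nat.card_eq_fintype_card]]
    rw [Qk]
    ring
  have hB : Nat.card (BDat k n) = 2^k * Qk (2*k) n := by
    unfold BDat
    rw [Nat.card_prod, card_aper hk, Qk]
  rw [hA, hB]
  ring

theorem card_succ_ge (n : ℕ) :
    2 * (Nat.card (PartialAut n) * Nat.card (PartialAut n))
      + 4 * Nat.card (PartialAut n) + 1 ≤ Nat.card (PartialAut (n+1)) := by
  classical
  have hsingle : ∀ (a c : Bool) (y : PartialAut n),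
      Inj (fun a' => if a' = a then some (c, y) else none) := by
    intro a c y a1 a2 c' y1 y2 h1 h2
    dsimp only at h1 h2
    by_cases e1 : a1 = a
    · by_cases e2 : a2 = a
      · rw [e1, e2]
      · rw [if_neg e2] at h2; cases h2
    · rw [if_neg e1] at h1; cases h1
  have hdouble : ∀ (σ : Bool) (y0 y1 : PartialAut n),
      Inj (fun a => some (xor a σ, if a then y1 else y0)) := by
    intro σ y0 y1 a1 a2 c' w1 w2 h1 h2
    dsimp only at h1 h2
    simp only [Option.some.injEq, Prod.mk.injEq] at h1 h2
    have := h1.1.trans h2.1.symm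
    cases a1 <;> cases a2 <;> cases σ <;> simp_all
  have hempty : Inj (n := n) (fun _ => none) := fun _ _ _ _ _ h => by cases h
  let F : (Bool × Bool × PartialAut n) ⊕ (Bool × PartialAut n × PartialAut n) ⊕ PUnit.{1} →
      PartialAut (n+1) := fun d =>
    match d with
    | Sum.inl (a, c, y) => glue (fun a' => if a' = a then some (c, y) else none) (hsingle a c y)
    | Sum.inr (Sum.inl (σ, y0, y1)) =>
        glue (fun a => some (xor a σ, if a then y1 else y0)) (hdouble σ y0 y1)
    | Sum.inr (Sum.inr _) => glue (fun _ => none) hempty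
  have hinj : Function.Injective F := by
    rintro (⟨a1, c1, y1⟩ | ⟨σ1, u1, w1⟩ | ⟨⟩) (⟨a2, c2, y2⟩ | ⟨σ2, u2, w2⟩ | ⟨⟩) h
    · have hf := glue_inj_data (hf := hsingle a1 c1 y1) (hg := hsingle a2 c2 y2) h
      have h1 := hf a1
      rw [if_pos rfl] at h1
      by_cases e12 : a1 = a2
      · rw [if_pos e12] at h1
        simp only [Option.some.injEq, Prod.mk.injEq] at h1
        rw [e12, h1.1, h1.2]
      · rw [if_neg e12] at h1; cases h1
    · exfalso
      have hf := glue_inj_data (hf := hsingle a1 c1 y1) (hg := hdouble σ2 u2 w2) h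
      have h1 := hf (!a1)
      rw [if_neg (Bool.not_ne_self a1)] at h1
      cases h1
    · exfalso
      have hf := glue_inj_data (hf := hsingle a1 c1 y1) (hg := hempty) h
      have h1 := hf a1
      rw [if_pos rfl] at h1
      cases h1
    · exfalso
      have hf := glue_inj_data (hf := hdouble σ1 u1 w1) (hg := hsingle a2 c2 y2) h
      have h1 := hf (!a2)
      rw [if_neg (Bool.not_ne_self a2)] at h1
      cases h1
    · have hf := glue_inj_data (hf := hdouble σ1 u1 w1) (hg := hdouble σ2 u2 w2) h
      have h1 := hf false
      have h2 := hf true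
      simp at h1 h2
      rw [h1.1, h1.2, h2.2]
    · exfalso
      have hf := glue_inj_data (hf := hdouble σ1 u1 w1) (hg := hempty) h
      have h1 := hf false
      cases h1
    · exfalso
      have hf := glue_inj_data (hf := hempty) (hg := hsingle a2 c2 y2) h
      have h1 := hf a2
      rw [if_pos rfl] at h1
      cases h1
    · exfalso
      have hf := glue_inj_data (hf := hempty) (hg := hdouble σ2 u2 w2) h
      have h1 := hf false
      cases h1
    · rfl
  have hcard := Nat.card_le_card_of_injective F hinj
  have hdom : Nat.card ((Bool × Bool × PartialAut n) ⊕ (Bool × PartialAut n × PartialAut n)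
      ⊕ PUnit.{1}) = 4 * Nat.card (PartialAut n)
      + (2 * (Nat.card (PartialAut n) * Nat.card (PartialAut n)) + 1) := by
    rw [Nat.card_sum, Nat.card_sum, Nat.card_prod, Nat.card_prod, Nat.card_prod,
      Nat.card_prod]
    rw [show Nat.card Bool = 2 by simp [Nat.card_eq_fintype_card]]
    rw [show Nat.card PUnit.{1} = 1 by simp [Nat.card_eq_fintype_card]]
    ring
  rw [hdom] at hcard
  omega

theorem card_pos (n : ℕ) : 0 < Nat.card (PartialAut n) := Nat.card_pos

theorem card_ge_seven : 7 ≤ Nat.card (PartialAut 1) := by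
  have h := card_succ_ge 0
  rw [show Nat.card (PartialAut 0) = 1 from Nat.card_unique] at h
  simp only [Nat.zero_add] at h
  omega

theorem arith_base : ∀ k, 1 ≤ k → 2*16^k + 2*4^k ≤ 28^k + 14^k := by
  intro k hk
  induction k with
  | zero => omega
  | succ k ih =>
    rcases Nat.eq_zero_or_pos k with rfl | hk1
    · norm_num
    · have h1 := ih hk1
      have h2 : (14:ℕ)^k ≤ 28^k := Nat.pow_le_pow_left (by norm_num) k
      rw [pow_succ, pow_succ, pow_succ, pow_succ]
      set a := (16:ℕ)^k
      set b := (4:ℕ)^k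
      set c := (28:ℕ)^k
      set d := (14:ℕ)^k
      omega

theorem key : ∀ m, 1 ≤ m → ∀ k, 1 ≤ k →
    2 * Qk (2*k) m ≤ Nat.card (PartialAut m) ^ k * Qk k m := by
  intro m
  induction m with
  | zero => intro h; exact absurd h (by omega)
  | succ m ih =>
    intro _ k hk
    have hk0 : 0 < k := hk
    have h2k : 0 < 2*k := by omega
    rw [Qk_rec hk0 m, Qk_rec h2k m]
    rcases Nat.eq_zero_or_pos m with rfl | hm
    · rw [Qk_zero, Qk_zero, Qk_zero,
        show Nat.card (PartialAut 0) = 1 from Nat.card_unique]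
      have h7 : (7:ℕ)^k ≤ Nat.card (PartialAut 1) ^ k :=
        Nat.pow_le_pow_left card_ge_seven k
      have hb := arith_base k hk
      have e1 : (2:ℕ)^(2*k) = 4^k := by rw [pow_mul]; norm_num
      have e2 : (4:ℕ)^k * 4^k = 16^k := by rw [← mul_pow]; norm_num
      have e3 : (7:ℕ)^k * 2^k = 14^k := by rw [← mul_pow]; norm_num
      have e4 : (7:ℕ)^k * (2^k * 2^k) = 28^k := by rw [← mul_pow, ← mul_pow]; norm_num
      calc 2 * (2^(2*k) * ((1+1)^(2*k) * 1 + 1))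
          = 2 * (16^k + 4^k) := by norm_num; rw [e1, ← e2]; ring
        _ ≤ 28^k + 14^k := by omega
        _ = 7^k * (2^k * ((1+1)^k * 1 + 1)) := by norm_num; rw [← e4, ← e3]; ring
        _ ≤ Nat.card (PartialAut 1) ^ k * (2^k * ((1+1)^k * 1 + 1)) :=
            Nat.mul_le_mul_right _ h7
    · have h1 := ih hm k hk
      have h2 := ih hm (2*k) (by omega)
      set N := Nat.card (PartialAut m) with hN
      set a := Qk k m with ha
      set c := Qk (2*k) m with hc
      set d := Qk (2*(2*k)) m with hd
      have hMge : 2*N*(N+1) ≤ Nat.card (PartialAut (m+1)) := by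
        have hcg := card_succ_ge m
        calc 2*N*(N+1) = 2*(N*N) + 2*N := by ring
          _ ≤ 2*(N*N) + 4*N + 1 := by omega
          _ ≤ _ := hcg
      have hMk : 2^k * N^k * (N+1)^k ≤ Nat.card (PartialAut (m+1)) ^ k := by
        calc 2^k * N^k * (N+1)^k = (2*N*(N+1))^k := by rw [mul_pow, mul_pow]
          _ ≤ _ := Nat.pow_le_pow_left hMge k
      set M := Nat.card (PartialAut (m+1)) with hM
      have hNI : N^k ≤ (N+1)^k := Nat.pow_le_pow_left (by omega) k
      have e2 : (2:ℕ)^(2*k) = 2^k * 2^k := by rw [two_mul, pow_add]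
      have e3 : (N+1)^(2*k) = (N+1)^k * (N+1)^k := by rw [two_mul, pow_add]
      have e4 : N^(2*k) = N^k * N^k := by rw [two_mul, pow_add]
      rw [e4] at h2
      refine Nat.le_of_mul_le_mul_left ?_ (pow_pos (card_pos m) k)
      rw [e2, e3]
      calc N^k * (2 * (2^k * 2^k * ((N+1)^k * (N+1)^k * c + d)))
          = 2^k * 2^k * (N+1)^k * (N+1)^k * N^k * (2*c)
            + 2^k * 2^k * N^k * (2*d) := by ring
        _ ≤ 2^k * 2^k * (N+1)^k * (N+1)^k * N^k * (N^k * a)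
            + 2^k * 2^k * N^k * (N^k * N^k * c) :=
            Nat.add_le_add (Nat.mul_le_mul_left _ h1) (Nat.mul_le_mul_left _ h2)
        _ = (2^k * N^k * (N+1)^k) * (2^k * (N+1)^k * a * N^k)
            + (2^k * N^k * N^k) * (2^k * c * N^k) := by ring
        _ ≤ M^k * (2^k * (N+1)^k * a * N^k) + M^k * (2^k * c * N^k) := by
            refine Nat.add_le_add (Nat.mul_le_mul_right _ hMk) (Nat.mul_le_mul_right _ ?_)
            calc 2^k * N^k * N^k ≤ 2^k * N^k * (N+1)^k := Nat.mul_le_mul_left _ hNI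
              _ ≤ M^k := hMk
        _ = N^k * (M^k * (2^k * ((N+1)^k * a + c))) := by ring

theorem Rn_succ_le (m : ℕ) (hm : 1 ≤ m) :
    4 * Nat.card (PartialAut m) * Rn (m+1) ≤ 6 * Nat.card (PartialAut (m+1)) * Rn m := by
  set N := Nat.card (PartialAut m) with hN
  have hrec : Rn (m+1) = 2 * ((N+1) * Qk 1 m + Qk 2 m) := by
    rw [Rn_eq_Qk, Qk_rec one_pos m, pow_one, pow_one, show 2*1 = 2 from rfl]
  have hkey : 2 * Qk 2 m ≤ N * Qk 1 m := by
    have h := key m hm 1 le_rfl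
    rw [show 2*1 = 2 from rfl, pow_one] at h
    exact h
  have hRQ : Rn m = Qk 1 m := Rn_eq_Qk m
  have hMge : 2*(N*N) + 4*N + 1 ≤ Nat.card (PartialAut (m+1)) := card_succ_ge m
  calc 4 * N * Rn (m+1) = 8*N*(N+1)*Qk 1 m + 4*N*(2*Qk 2 m) := by rw [hrec]; ring
    _ ≤ 8*N*(N+1)*Qk 1 m + 4*N*(N*Qk 1 m) := Nat.add_le_add_left (Nat.mul_le_mul_left _ hkey) _
    _ = (12*(N*N) + 8*N) * Qk 1 m := by ring
    _ ≤ (6 * Nat.card (PartialAut (m+1))) * Qk 1 m := by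
        refine Nat.mul_le_mul_right _ ?_
        set A := N*N
        omega
    _ = 6 * Nat.card (PartialAut (m+1)) * Rn m := by rw [hRQ]

end PartialAut
/-- with `p_n = R_n / (2^n N_n)`, one has `p_n ≤ (3/4) p_{n-1}`
for all `n ≥ 2`. -/
theorem pn_le (n : ℕ) (hn : 2 ≤ n) : pn n ≤ (3 / 4 : ℝ) * pn (n - 1) := by
  obtain ⟨m, rfl⟩ : ∃ m, n = m + 1 := ⟨n - 1, by omega⟩
  have hm : 1 ≤ m := by omega
  have hNat := PartialAut.Rn_succ_le m hm
  have hNpos : 0 < Nat.card (PartialAut m) := PartialAut.card_pos m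
  have hMpos : 0 < Nat.card (PartialAut (m+1)) := PartialAut.card_pos (m+1)
  rw [show m + 1 - 1 = m from rfl]
  unfold pn Nn
  have hd1 : (0:ℝ) < 2^(m+1) * (Nat.card (PartialAut (m+1)) : ℝ) := by positivity
  have hd2 : (0:ℝ) < 4 * (2^m * (Nat.card (PartialAut m) : ℝ)) := by positivity
  rw [show (3/4 : ℝ) * ((Rn m : ℝ)/(2^m * (Nat.card (PartialAut m) : ℝ)))
      = (3 * (Rn m : ℝ))/(4 * (2^m * (Nat.card (PartialAut m) : ℝ))) from by ring]
  rw [div_le_div_iff₀ hd1 hd2]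
  have hc : ((4 * Nat.card (PartialAut m) * Rn (m+1) : ℕ) : ℝ)
      ≤ ((6 * Nat.card (PartialAut (m+1)) * Rn m : ℕ) : ℝ) := Nat.cast_le.mpr hNat
  push_cast at hc
  calc ((Rn (m+1) : ℝ)) * (4*(2^m * (Nat.card (PartialAut m) : ℝ)))
      = 2^m * (4 * (Nat.card (PartialAut m) : ℝ) * (Rn (m+1) : ℝ)) := by ring
    _ ≤ 2^m * (6 * (Nat.card (PartialAut (m+1)) : ℝ) * (Rn m : ℝ)) := by
        apply mul_le_mul_of_nonneg_left hc (by positivity)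
    _ = 3 * (Rn m : ℝ) * (2^(m+1) * (Nat.card (PartialAut (m+1)) : ℝ)) := by
        rw [pow_succ]; ring
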